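/- arXiv:1311.2542 — 2 statements merged into one kernel-verified Lean document; each statement's English description precedes it below -/
import Mathlib

section
/- Let A ∈ ℝ^{n×d}, b ∈ ℝ^n, let C ⊂ ℝ^d be a closed convex set, and let Φ ∈ ℝ^{m×n} be any matrix. Set f(x) = ‖Ax − b‖₂² and g(x) = ‖ΦAx − Φb‖₂². Let x_* minimize f over C and let x̂ minimize g over C, and assume Ax_* ≠ b. Set u = (Ax_* − b)/‖Ax_* − b‖₂, Z₁ = Z₁(A, Φ, T_C(x_*)) and Z₂ = Z₂(A, Φ, T_C(x_*), u), and assume Z₁ > 0. Then f(x̂) ≤ (1 + Z₂/Z₁)² f(x_*). Moreover, if x_* is a global minimizer of f over ℝ^d, then f(x̂) ≤ (1 + Z₂²/Z₁²) f(x_*). -/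
open MeasureTheory ProbabilityTheory
open scoped ENNReal NNReal

noncomputable section

namespace SDR

/-- Squared Euclidean norm. -/
def sqSum {ι : Type*} [Fintype ι] (v : ι → ℝ) : ℝ := ∑ i, v i ^ 2

/-- Euclidean norm. -/
def l2 {ι : Type*} [Fintype ι] (v : ι → ℝ) : ℝ := Real.sqrt (∑ i, v i ^ 2)

/-- Standard Gaussian measure on `ℝ^n`. -/
def stdGaussian (n : ℕ) : Measure (Fin n → ℝ) :=
  Measure.pi fun _ => gaussianReal 0 1

/-- Gaussian mean width of a subset of `ℝ^n`. -/
def gaussWidth {n : ℕ} (T : Set (Fin n → ℝ)) : ℝ :=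
  ∫ g, (⨆ x : T, ∑ j, g j * x.1 j) ∂stdGaussian n

/-- Bernoulli measure on `ℝ` with mean `p` (supported on `{0,1}`). -/
def bernoulliReal (p : ℝ) : Measure ℝ :=
  (Real.toNNReal (1 - p)) • Measure.dirac 0 + (Real.toNNReal p) • Measure.dirac 1

instance (p : ℝ) : IsFiniteMeasure (bernoulliReal p) := by
  unfold bernoulliReal; infer_instance

/-- Product of i.i.d. Bernoulli measures on `ℝ^n`. -/
def bernoulliPi (n : ℕ) (p : ℝ) : Measure (Fin n → ℝ) :=
  Measure.pi fun _ => bernoulliReal p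

/-- The complexity parameter `κ(T)`. -/
def kappa (m s : ℕ) {n : ℕ} (T : Set (Fin n → ℝ)) : ℝ :=
  ⨆ q : {q : ℝ // 1 ≤ q ∧ q ≤ ((m : ℝ) / s) * Real.log s},
    (1 / Real.sqrt (q.1 * s)) *
      (∫ η, (∫ g, (⨆ x : T, |∑ j, η j * g j * x.1 j|) ∂stdGaussian n) ^ q.1
        ∂bernoulliPi n (q.1 * s / (m * Real.log s))) ^ (1 / q.1)

/-- The random semi-norm `‖x‖_δ`. -/
def deltaNorm {m n : ℕ} (s : ℕ) (δ : Fin m → Fin n → ℝ) (x : Fin n → ℝ) : ℝ :=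
  (1 / Real.sqrt s) * ⨆ i : Fin m, Real.sqrt (∑ j, δ i j * x j ^ 2)

/-- Diameter of `T` under `‖·‖_δ`. -/
def deltaDiam {m n : ℕ} (s : ℕ) (δ : Fin m → Fin n → ℝ) (T : Set (Fin n → ℝ)) : ℝ :=
  ⨆ x : T, deltaNorm s δ x.1

/-- Talagrand's `γ₂` functional of a set `S` with respect to a (semi-)metric `ρ`. -/
def gamma2 {E : Type*} (S : Set E) (ρ : E → E → ℝ) : ℝ :=
  ⨅ A : {A : ℕ → Finset E // (∀ r : ℕ, ↑(A r) ⊆ S) ∧ (A 0).card = 1 ∧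
      (∀ r : ℕ, (A r).card ≤ 2 ^ 2 ^ r) ∧ ∀ r : ℕ, A r ⊆ A (r + 1)},
    ⨆ x : S, ∑' r : ℕ, (2 : ℝ) ^ ((r : ℝ) / 2) * ⨅ y : (A.1 r), ρ x.1 y.1

/-- The semi-norm `⦀x⦀_T = sup_{y ∈ T} |⟨x, y⟩|`. -/
def tnorm {n : ℕ} (T : Set (Fin n → ℝ)) (x : Fin n → ℝ) : ℝ :=
  ⨆ y : T, |∑ j, x j * y.1 j|

/-- The random 0/1 array underlying an SJLT with column sparsity `s`. -/
def IsSJLTDelta {Ω : Type*} [MeasurableSpace Ω] (μ : Measure Ω)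
    (m n s : ℕ) (δ : Ω → Fin m → Fin n → ℝ) : Prop :=
  (∀ i j, Measurable fun ω => δ ω i j) ∧
  (∀ ω i j, δ ω i j = 0 ∨ δ ω i j = 1) ∧
  (∀ ω j, ∑ i, δ ω i j = s) ∧
  (∀ (j : Fin n) (I : Finset (Fin m)),
    ∫ ω, ∏ i ∈ I, δ ω i j ∂μ ≤ ((s : ℝ) / m) ^ I.card) ∧
  iIndepFun (fun (j : Fin n) (ω : Ω) (i : Fin m) => δ ω i j) μ

/-- An i.i.d. Rademacher array. -/
def IsRademacherArray {Ω : Type*} [MeasurableSpace Ω] (μ : Measure Ω)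
    (m n : ℕ) (σ : Ω → Fin m → Fin n → ℝ) : Prop :=
  (∀ i j, Measurable fun ω => σ ω i j) ∧
  (∀ i j, μ {ω | σ ω i j = 1} = 1/2 ∧ μ {ω | σ ω i j = -1} = 1/2) ∧
  iIndepFun (fun (p : Fin m × Fin n) (ω : Ω) => σ ω p.1 p.2) μ

/-- A sparse Johnson–Lindenstrauss transform with `m` rows, `n` columns and
column sparsity `s`, realized on a probability space `(Ω, μ)`. -/
def IsSJLT {Ω : Type*} [MeasurableSpace Ω] (μ : Measure Ω)
    (m n s : ℕ) (σ δ : Ω → Fin m → Fin n → ℝ)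
    (Φ : Ω → Matrix (Fin m) (Fin n) ℝ) : Prop :=
  IsRademacherArray μ m n σ ∧ IsSJLTDelta μ m n s δ ∧
  IndepFun (fun ω => σ ω) (fun ω => δ ω) μ ∧
  ∀ ω i j, Φ ω i j = σ ω i j * δ ω i j / Real.sqrt s

/-- Covering number of `S` by balls of radius `u` (in the semi-norm `N`)
centered at points of `S`. -/
def covNum {n : ℕ} (S : Set (Fin n → ℝ)) (N : (Fin n → ℝ) → ℝ) (u : ℝ) : ℝ≥0∞ :=
  ⨅ F : {F : Finset (Fin n → ℝ) // ↑F ⊆ S ∧ ∀ x ∈ S, ∃ y ∈ F, N (x - y) ≤ u},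
    (F.1.card : ℝ≥0∞)

/-- Logarithm of the covering number. -/
def logCov {n : ℕ} (S : Set (Fin n → ℝ)) (N : (Fin n → ℝ) → ℝ) (u : ℝ) : ℝ :=
  Real.log (covNum S N u).toReal

/-- `N` is a semi-norm. -/
def IsSeminorm {n : ℕ} (N : (Fin n → ℝ) → ℝ) : Prop :=
  (∀ x y, N (x + y) ≤ N x + N y) ∧ ∀ (a : ℝ) (x), N (a • x) = |a| * N x

/-- `t` is an admissible type-2 constant for the semi-norm `N`. -/
def IsType2With {n : ℕ} (N : (Fin n → ℝ) → ℝ) (t : ℝ) : Prop :=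
  ∀ (k : ℕ) (x : Fin k → Fin n → ℝ),
    (∫ g, N (∑ α, g α • x α) ∂stdGaussian k) ≤ t * Real.sqrt (∑ α, N (x α) ^ 2)

/-- The type-2 constant of the semi-norm `N`. -/
def type2Const {n : ℕ} (N : (Fin n → ℝ) → ℝ) : ℝ :=
  sInf {t : ℝ | 0 ≤ t ∧ IsType2With N t}

/-- Diameter of `S` with respect to the semi-norm `N`. -/
def diamN {n : ℕ} (N : (Fin n → ℝ) → ℝ) (S : Set (Fin n → ℝ)) : ℝ :=
  ⨆ x : S, ⨆ y : S, N (x.1 - y.1)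

/-- The `ℓ_{2,1}` block norm on `ℝ^{b × D}`. -/
def norm21 {b D : ℕ} (x : Fin b × Fin D → ℝ) : ℝ :=
  ∑ ℓ : Fin b, Real.sqrt (∑ k : Fin D, x (ℓ, k) ^ 2)

/-- The norm `⦀A⦀` of a block matrix. -/
def blockNorm {n b D : ℕ} (A : Matrix (Fin n) (Fin b × Fin D) ℝ) : ℝ :=
  ⨆ ℓ : Fin b, Real.sqrt (∑ j : Fin n, ∑ k : Fin D, A j (ℓ, k) ^ 2)

/-- The norm `‖A‖_{ℓ_{2,1} → ℓ_∞}` of a block matrix. -/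
def norm21ToInf {n b D : ℕ} (A : Matrix (Fin n) (Fin b × Fin D) ℝ) : ℝ :=
  ⨆ j : Fin n, ⨆ ℓ : Fin b, Real.sqrt (∑ k : Fin D, A j (ℓ, k) ^ 2)

/-- The tangent cone of `C` at `x`: the closed cone generated by `C - {x}`. -/
def tangentCone {ι : Type*} [Fintype ι] (C : Set (ι → ℝ)) (x : ι → ℝ) : Set (ι → ℝ) :=
  closure {v | ∃ t : ℝ, 0 ≤ t ∧ ∃ y ∈ C, v = t • (y - x)}

/-- `Z₁(A, Φ, K) = inf_{v ∈ AK ∩ S^{n-1}} ‖Φ v‖₂²`. -/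
def Z1 {n m : ℕ} {ι : Type*} [Fintype ι] (A : Matrix (Fin n) ι ℝ)
    (Φ : Matrix (Fin m) (Fin n) ℝ) (K : Set (ι → ℝ)) : ℝ :=
  ⨅ v : {v : Fin n → ℝ // (∃ y ∈ K, A.mulVec y = v) ∧ ∑ i, v i ^ 2 = 1},
    ∑ i, (Φ.mulVec v.1 i) ^ 2

/-- `Z₂(A, Φ, K, u) = sup_{v ∈ AK ∩ S^{n-1}} |⟨Φu, Φv⟩ - ⟨u, v⟩|`. -/
def Z2 {n m : ℕ} {ι : Type*} [Fintype ι] (A : Matrix (Fin n) ι ℝ)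
    (Φ : Matrix (Fin m) (Fin n) ℝ) (K : Set (ι → ℝ)) (u : Fin n → ℝ) : ℝ :=
  ⨆ v : {v : Fin n → ℝ // (∃ y ∈ K, A.mulVec y = v) ∧ ∑ i, v i ^ 2 = 1},
    |(∑ i, Φ.mulVec u i * Φ.mulVec v.1 i) - ∑ i, u i * v.1 i|

/-- The incoherence (largest leverage score) of a subspace of `ℝ^n`. -/
def incoherence {n : ℕ} (E : Submodule ℝ (EuclideanSpace ℝ (Fin n))) : ℝ :=
  ⨆ j : Fin n,
    ‖(E.orthogonalProjectionOnto (EuclideanSpace.single j 1) : EuclideanSpace ℝ (Fin n))‖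


/-- The column space of a matrix, as a subspace of Euclidean space. -/
def colSpace {n d : ℕ} (A : Matrix (Fin n) (Fin d) ℝ) :
    Submodule ℝ (EuclideanSpace ℝ (Fin n)) :=
  Submodule.span ℝ (Set.range fun k : Fin d => (WithLp.toLp 2 (fun i => A i k) : EuclideanSpace ℝ (Fin n)))

/-- The largest leverage score `μ(A)` of a matrix. -/
def colIncoherence {n d : ℕ} (A : Matrix (Fin n) (Fin d) ℝ) : ℝ :=
  incoherence (colSpace A)

/-- The `ℓ₂ → ℓ₂` operator norm of a matrix. -/
def opNorm {m n : ℕ} (A : Matrix (Fin m) (Fin n) ℝ) : ℝ :=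
  ⨆ x : {x : Fin n → ℝ // sqSum x = 1}, l2 (A.mulVec x.1)

/-!
Write `r = A x_* - b` and `e = A (x̂ - x_*)`. Optimality of `x_*` over the convex set `C` gives the
variational inequality `⟪r, e⟫ ≥ 0`, and optimality of `x̂` for the sketched problem gives
`‖Φ e‖² ≤ -⟪Φ r, Φ e⟫`. As `e / ‖e‖` is a unit vector of `A T_C(x_*)`, the definitions of `Z₁` and
`Z₂` yield `Z₁ ‖e‖² ≤ ‖Φ e‖² ≤ Z₂ ‖r‖ ‖e‖ - ⟪r, e⟫ ≤ Z₂ ‖r‖ ‖e‖`, i.e. `‖e‖ ≤ (Z₂ / Z₁) ‖r‖`.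
The triangle inequality for `A x̂ - b = r + e` gives the first bound. If `x_*` is a global
minimizer then `⟪r, e⟫ = 0`, and Pythagoras gives the second.
-/

open Set
open scoped RealInnerProductSpace Matrix
open WithLp (toLp)

theorem norm_add_sq_le_of_norm_le {E : Type*} [SeminormedAddCommGroup E] {r e : E} {c : ℝ}
    (h : ‖e‖ ≤ c * ‖r‖) : ‖r + e‖ ^ 2 ≤ (1 + c) ^ 2 * ‖r‖ ^ 2 := by
  rw [← mul_pow]
  exact pow_le_pow_left₀ (norm_nonneg _) ((norm_add_le r e).trans (by linarith)) 2

section InnerProductSpace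

variable {F G : Type*} [NormedAddCommGroup F] [InnerProductSpace ℝ F]
  [NormedAddCommGroup G] [InnerProductSpace ℝ G]

theorem norm_add_sq_le_of_inner_eq_zero {r e : F} {c : ℝ} (hre : ⟪r, e⟫ = 0)
    (h : ‖e‖ ≤ c * ‖r‖) : ‖r + e‖ ^ 2 ≤ (1 + c ^ 2) * ‖r‖ ^ 2 := by
  rw [norm_add_sq_real, hre]
  nlinarith [pow_le_pow_left₀ (norm_nonneg e) h 2]

theorem inner_sub_nonneg_of_forall_norm_le {K : Set F} (hK : Convex ℝ K) {r s : F}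
    (hr : r ∈ K) (hs : s ∈ K) (hmin : ∀ t ∈ K, ‖r‖ ≤ ‖t‖) : 0 ≤ ⟪r, s - r⟫ := by
  have hinf : ‖0 - r‖ = ⨅ t : K, ‖0 - (t : F)‖ := by
    simpa using ((isMinOn_iff.2 hmin).iInf_eq hr).symm
  simpa [inner_neg_left] using (norm_eq_iInf_iff_real_inner_le_zero hK hr).1 hinf s hs

theorem inner_linear_eq_zero_of_forall_norm_le {E : Type*} [AddCommGroup E] [Module ℝ E]
    (f : E →ᵃ[ℝ] F) {x₀ : E} (hmin : ∀ x, ‖f x₀‖ ≤ ‖f x‖) (v : E) :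
    ⟪f x₀, f.linear v⟫ = 0 := by
  have hopt (w : E) : 0 ≤ ⟪f x₀, f.linear w⟫ := by
    have := inner_sub_nonneg_of_forall_norm_le (convex_univ.affine_image f)
      (mem_image_of_mem f (mem_univ x₀)) (mem_image_of_mem f (mem_univ (w +ᵥ x₀)))
      (forall_mem_image.2 fun x _ => hmin x)
    rwa [← vsub_eq_sub, ← f.linearMap_vsub, vadd_vsub] at this
  exact le_antisymm (by simpa [inner_neg_right] using hopt (-v)) (hopt v)

theorem exists_norm_eq_one_of_ray {W : Set F} {e : F} (hW : ∀ c : ℝ, 0 ≤ c → c • e ∈ W)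
    (he : e ≠ 0) : ∃ v ∈ W, ‖v‖ = 1 ∧ e = ‖e‖ • v :=
  ⟨‖e‖⁻¹ • e, hW _ (by positivity), norm_smul_inv_norm he,
    by rw [smul_inv_smul₀ (norm_ne_zero_iff.2 he)]⟩

variable (Ψ : F →ₗ[ℝ] G) {W : Set F} {e : F}

theorem mul_norm_sq_le_of_ray (hW : ∀ c : ℝ, 0 ≤ c → c • e ∈ W) {Z : ℝ}
    (hZ : ∀ v ∈ W, ‖v‖ = 1 → Z ≤ ‖Ψ v‖ ^ 2) : Z * ‖e‖ ^ 2 ≤ ‖Ψ e‖ ^ 2 := by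
  rcases eq_or_ne e 0 with rfl | he
  · simp
  obtain ⟨v, hvW, hv, hev⟩ := exists_norm_eq_one_of_ray hW he
  have := hZ v hvW hv
  rw [hev, map_smul, norm_smul, norm_smul, hv, norm_norm]
  nlinarith [sq_nonneg ‖e‖]

theorem inner_sub_inner_le_of_ray (hW : ∀ c : ℝ, 0 ≤ c → c • e ∈ W) {Z : ℝ} (r : F)
    (hZ : ∀ v ∈ W, ‖v‖ = 1 → |⟪Ψ (‖r‖⁻¹ • r), Ψ v⟫ - ⟪‖r‖⁻¹ • r, v⟫| ≤ Z) :
    ⟪r, e⟫ - ⟪Ψ r, Ψ e⟫ ≤ Z * ‖r‖ * ‖e‖ := by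
  rcases eq_or_ne e 0 with rfl | he
  · simp
  rcases eq_or_ne r 0 with rfl | hr
  · simp
  obtain ⟨v, hvW, hv, hev⟩ := exists_norm_eq_one_of_ray hW he
  have hbound := neg_le_of_abs_le (hZ v hvW hv)
  simp only [map_smul, real_inner_smul_left, ← mul_sub] at hbound
  rw [le_inv_mul_iff₀ (norm_pos_iff.2 hr)] at hbound
  conv_lhs => rw [hev, map_smul, real_inner_smul_right, real_inner_smul_right]
  nlinarith [mul_le_mul_of_nonneg_left hbound (norm_nonneg e)]

theorem abs_inner_map_sub_inner_le [FiniteDimensional ℝ F] (u v : F) :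
    |⟪Ψ u, Ψ v⟫ - ⟪u, v⟫| ≤ (‖Ψ u‖ * ‖LinearMap.toContinuousLinearMap Ψ‖ + ‖u‖) * ‖v‖ := by
  have hΨv : ‖Ψ v‖ ≤ ‖LinearMap.toContinuousLinearMap Ψ‖ * ‖v‖ :=
    (LinearMap.toContinuousLinearMap Ψ).le_opNorm v
  calc |⟪Ψ u, Ψ v⟫ - ⟪u, v⟫| ≤ |⟪Ψ u, Ψ v⟫| + |⟪u, v⟫| := abs_sub _ _
    _ ≤ ‖Ψ u‖ * ‖Ψ v‖ + ‖u‖ * ‖v‖ :=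
      add_le_add (abs_real_inner_le_norm _ _) (abs_real_inner_le_norm _ _)
    _ ≤ _ := by nlinarith [norm_nonneg (Ψ u)]

theorem norm_sub_le_div_mul_norm_of_sketched_min {K : Set F} (hK : Convex ℝ K) {r r' : F}
    (hr : r ∈ K) (hr' : r' ∈ K) (hmin : ∀ s ∈ K, ‖r‖ ≤ ‖s‖)
    (hmin' : ∀ s ∈ K, ‖Ψ r'‖ ≤ ‖Ψ s‖) (hW : ∀ c : ℝ, 0 ≤ c → c • (r' - r) ∈ W)
    {Z₁ Z₂ : ℝ} (hZ₁pos : 0 < Z₁) (hZ₂nonneg : 0 ≤ Z₂)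
    (hZ₁ : ∀ v ∈ W, ‖v‖ = 1 → Z₁ ≤ ‖Ψ v‖ ^ 2)
    (hZ₂ : ∀ v ∈ W, ‖v‖ = 1 → |⟪Ψ (‖r‖⁻¹ • r), Ψ v⟫ - ⟪‖r‖⁻¹ • r, v⟫| ≤ Z₂) :
    ‖r' - r‖ ≤ Z₂ / Z₁ * ‖r‖ := by
  have hopt : 0 ≤ ⟪r, r' - r⟫ := inner_sub_nonneg_of_forall_norm_le hK hr hr' hmin
  have hopt' : 0 ≤ ⟪Ψ r', Ψ r - Ψ r'⟫ :=
    inner_sub_nonneg_of_forall_norm_le (hK.linear_image Ψ) (mem_image_of_mem Ψ hr')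
      (mem_image_of_mem Ψ hr) (forall_mem_image.2 hmin')
  have hΨe : ‖Ψ (r' - r)‖ ^ 2 ≤ -⟪Ψ r, Ψ (r' - r)⟫ := by
    have h : Ψ r' = Ψ r + Ψ (r' - r) := by rw [map_sub, add_sub_cancel]
    rw [h, sub_add_cancel_left, inner_add_left, inner_neg_right, inner_neg_right,
      real_inner_self_eq_norm_sq] at hopt'
    linarith
  have h₁ : Z₁ * ‖r' - r‖ ^ 2 ≤ ‖Ψ (r' - r)‖ ^ 2 := mul_norm_sq_le_of_ray Ψ hW hZ₁
  have h₂ : ⟪r, r' - r⟫ - ⟪Ψ r, Ψ (r' - r)⟫ ≤ Z₂ * ‖r‖ * ‖r' - r‖ :=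
    inner_sub_inner_le_of_ray Ψ hW r hZ₂
  have hkey : Z₁ * ‖r' - r‖ ^ 2 ≤ Z₂ * ‖r‖ * ‖r' - r‖ := by linarith
  rcases (norm_nonneg (r' - r)).eq_or_lt with he | he
  · rw [← he]
    positivity
  rw [div_mul_eq_mul_div, le_div_iff₀ hZ₁pos]
  nlinarith

end InnerProductSpace

section EuclideanSpace

variable {ι κ : Type*} [Fintype ι] [Fintype κ]

theorem sum_sq_eq_norm_sq (v : ι → ℝ) : ∑ i, v i ^ 2 = ‖toLp 2 v‖ ^ 2 := by
  simp [EuclideanSpace.real_norm_sq_eq]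

theorem l2_eq_norm (v : ι → ℝ) : l2 v = ‖toLp 2 v‖ := by
  simp [l2, EuclideanSpace.norm_eq]

theorem sum_mul_eq_inner (u v : ι → ℝ) : ∑ i, u i * v i = ⟪toLp 2 u, toLp 2 v⟫ := by
  simp [EuclideanSpace.inner_toLp_toLp, dotProduct, mul_comm]

def residualMap (A : Matrix κ ι ℝ) (b : κ → ℝ) : (ι → ℝ) →ᵃ[ℝ] EuclideanSpace ℝ κ where
  toFun x := toLp 2 (A *ᵥ x - b)
  linear := (WithLp.linearEquiv 2 ℝ (κ → ℝ)).symm.toLinearMap ∘ₗ A.mulVecLin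
  map_vadd' x v := by
    ext i
    simp [Matrix.mulVec_add]
    ring

end EuclideanSpace

section Sketch

variable {n m : ℕ} {ι : Type*} [Fintype ι] {A : Matrix (Fin n) ι ℝ}
  (Φ : Matrix (Fin m) (Fin n) ℝ) {K : Set (ι → ℝ)} {v : EuclideanSpace ℝ (Fin n)}

theorem Z1_le_norm_sq (hv : ∃ y ∈ K, toLp 2 (A *ᵥ y) = v) (hv₁ : ‖v‖ = 1) :
    Z1 A Φ K ≤ ‖Matrix.toLpLin 2 2 Φ v‖ ^ 2 := by
  obtain ⟨y, hy, rfl⟩ := hv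
  have hunit : ∑ i, (A *ᵥ y) i ^ 2 = 1 := by rw [sum_sq_eq_norm_sq, hv₁, one_pow]
  refine (ciInf_le ⟨0, ?_⟩ ⟨A *ᵥ y, ⟨y, hy, rfl⟩, hunit⟩).trans_eq ?_
  · rintro _ ⟨w, rfl⟩
    positivity
  · exact sum_sq_eq_norm_sq _

theorem abs_inner_sub_inner_le_Z2 (u : Fin n → ℝ) (hv : ∃ y ∈ K, toLp 2 (A *ᵥ y) = v)
    (hv₁ : ‖v‖ = 1) :
    |⟪Matrix.toLpLin 2 2 Φ (toLp 2 u), Matrix.toLpLin 2 2 Φ v⟫ - ⟪toLp 2 u, v⟫| ≤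
      Z2 A Φ K u := by
  obtain ⟨y, hy, rfl⟩ := hv
  have hunit : ∑ i, (A *ᵥ y) i ^ 2 = 1 := by rw [sum_sq_eq_norm_sq, hv₁, one_pow]
  set Ψ := Matrix.toLpLin 2 2 Φ
  refine le_ciSup_of_le ⟨‖Ψ (toLp 2 u)‖ * ‖LinearMap.toContinuousLinearMap Ψ‖ + ‖toLp 2 u‖, ?_⟩
    ⟨A *ᵥ y, ⟨y, hy, rfl⟩, hunit⟩ ?_
  · rintro _ ⟨⟨w, -, hw₁⟩, rfl⟩
    have := abs_inner_map_sub_inner_le Ψ (toLp 2 u) (toLp 2 w)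
    rw [sum_sq_eq_norm_sq, pow_eq_one_iff_of_nonneg (norm_nonneg _) two_ne_zero] at hw₁
    simpa [sum_mul_eq_inner, hw₁, Ψ] using this
  · simp [sum_mul_eq_inner, Ψ]

end Sketch

theorem sketched_least_squares_compare_general
    {n d m : ℕ} (A : Matrix (Fin n) (Fin d) ℝ) (b : Fin n → ℝ)
    (C : Set (Fin d → ℝ)) (hCconv : Convex ℝ C)
    (Φ : Matrix (Fin m) (Fin n) ℝ) (xs xh : Fin d → ℝ)
    (hxsC : xs ∈ C)
    (hxs : ∀ x ∈ C, sqSum (A.mulVec xs - b) ≤ sqSum (A.mulVec x - b))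
    (hxhC : xh ∈ C)
    (hxh : ∀ x ∈ C,
      sqSum (Φ.mulVec (A.mulVec xh) - Φ.mulVec b) ≤
        sqSum (Φ.mulVec (A.mulVec x) - Φ.mulVec b))
    (u : Fin n → ℝ) (hu : u = (l2 (A.mulVec xs - b))⁻¹ • (A.mulVec xs - b))
    (Z₁ Z₂ : ℝ)
    (hZ₁ : Z₁ = Z1 A Φ (tangentCone C xs))
    (hZ₂ : Z₂ = Z2 A Φ (tangentCone C xs) u)
    (hZ₁pos : 0 < Z₁) :
    sqSum (A.mulVec xh - b) ≤ (1 + Z₂ / Z₁) ^ 2 * sqSum (A.mulVec xs - b) ∧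
    ((∀ x : Fin d → ℝ, sqSum (A.mulVec xs - b) ≤ sqSum (A.mulVec x - b)) →
      sqSum (A.mulVec xh - b) ≤
        (1 + Z₂ ^ 2 / Z₁ ^ 2) * sqSum (A.mulVec xs - b)) := by
  set f := residualMap A b
  set Ψ := Matrix.toLpLin 2 2 Φ
  have hf (x : Fin d → ℝ) : sqSum (A *ᵥ x - b) = ‖f x‖ ^ 2 := sum_sq_eq_norm_sq _
  have hΨf (x : Fin d → ℝ) : sqSum (Φ *ᵥ (A *ᵥ x) - Φ *ᵥ b) = ‖Ψ (f x)‖ ^ 2 := by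
    rw [← Matrix.mulVec_sub]
    exact sum_sq_eq_norm_sq _
  have hsq (x : Fin d → ℝ) := sq_le_sq₀ (norm_nonneg (f xs)) (norm_nonneg (f x))
  have hmin : ∀ s ∈ f '' C, ‖f xs‖ ≤ ‖s‖ :=
    forall_mem_image.2 fun x hx => by simpa only [hf, hsq] using hxs x hx
  have hmin' : ∀ s ∈ f '' C, ‖Ψ (f xh)‖ ≤ ‖Ψ s‖ := forall_mem_image.2 fun x hx => by
    simpa only [hΨf, sq_le_sq₀ (norm_nonneg _) (norm_nonneg _)] using hxh x hx
  have hW (c : ℝ) (hc : 0 ≤ c) :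
      c • (f xh - f xs) ∈ {v | ∃ y ∈ tangentCone C xs, toLp 2 (A *ᵥ y) = v} := by
    refine ⟨c • (xh - xs), subset_closure ⟨c, hc, xh, hxhC, rfl⟩, ?_⟩
    ext
    simp [f, residualMap, Matrix.mulVec_smul, Matrix.mulVec_sub]
  have hu' : toLp 2 u = ‖f xs‖⁻¹ • f xs := by rw [hu, l2_eq_norm]; rfl
  have herr : ‖f xh - f xs‖ ≤ Z₂ / Z₁ * ‖f xs‖ :=
    norm_sub_le_div_mul_norm_of_sketched_min Ψ (hCconv.affine_image f)
      (mem_image_of_mem f hxsC) (mem_image_of_mem f hxhC) hmin hmin' hW hZ₁pos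
      (hZ₂ ▸ Real.iSup_nonneg fun _ => abs_nonneg _)
      (fun v hv hv₁ => hZ₁ ▸ Z1_le_norm_sq Φ hv hv₁)
      (fun v hv hv₁ => hu' ▸ hZ₂ ▸ abs_inner_sub_inner_le_Z2 Φ u hv hv₁)
  rw [hf, hf, ← add_sub_cancel (f xs) (f xh)]
  refine ⟨norm_add_sq_le_of_norm_le herr, fun hglob => div_pow Z₂ Z₁ 2 ▸ ?_⟩
  refine norm_add_sq_le_of_inner_eq_zero ?_ herr
  rw [← vsub_eq_sub, ← f.linearMap_vsub]
  exact inner_linear_eq_zero_of_forall_norm_le f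
    (fun x => by simpa only [hf, hsq] using hglob x) _

/-- Comparison between the optimal values of a constrained least squares program
and its sketched version, in terms of `Z₁` and `Z₂`. -/
theorem sketched_least_squares_compare
    {n d m : ℕ} (A : Matrix (Fin n) (Fin d) ℝ) (b : Fin n → ℝ)
    (C : Set (Fin d → ℝ)) (hCcl : IsClosed C) (hCconv : Convex ℝ C)
    (Φ : Matrix (Fin m) (Fin n) ℝ) (xs xh : Fin d → ℝ)
    (hxsC : xs ∈ C)
    (hxs : ∀ x ∈ C, sqSum (A.mulVec xs - b) ≤ sqSum (A.mulVec x - b))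
    (hxhC : xh ∈ C)
    (hxh : ∀ x ∈ C,
      sqSum (Φ.mulVec (A.mulVec xh) - Φ.mulVec b) ≤
        sqSum (Φ.mulVec (A.mulVec x) - Φ.mulVec b))
    (hne : A.mulVec xs ≠ b)
    (u : Fin n → ℝ) (hu : u = (l2 (A.mulVec xs - b))⁻¹ • (A.mulVec xs - b))
    (Z₁ Z₂ : ℝ)
    (hZ₁ : Z₁ = Z1 A Φ (tangentCone C xs))
    (hZ₂ : Z₂ = Z2 A Φ (tangentCone C xs) u)
    (hZ₁pos : 0 < Z₁) :
    sqSum (A.mulVec xh - b) ≤ (1 + Z₂ / Z₁) ^ 2 * sqSum (A.mulVec xs - b) ∧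
    ((∀ x : Fin d → ℝ, sqSum (A.mulVec xs - b) ≤ sqSum (A.mulVec x - b)) →
      sqSum (A.mulVec xh - b) ≤
        (1 + Z₂ ^ 2 / Z₁ ^ 2) * sqSum (A.mulVec xs - b)) :=
  sketched_least_squares_compare_general A b C hCconv Φ xs xh hxsC hxs hxhC hxh u hu Z₁ Z₂ hZ₁ hZ₂
    hZ₁pos

end SDR
end
end

section
/- There is a universal constant c > 0 with the following property. Let Φ be an SJLT with m rows, n columns and column sparsity s. Fix x ∈ ℝ^n such that |x_j| ≥ 1 for all j in a set J ⊂ {1,…,n} with |J| = r, and set r₁ = min{sr/3, cm}. Then with probability at least 1 − 2^{−sr} (over Φ) one has |{ i ∈ {1,…,m} : Σ_{j=1}^n Φ_{ij}² x_j² ≥ 1/s }| > r₁. -/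
open MeasureTheory ProbabilityTheory
open scoped ENNReal NNReal

noncomputable section

namespace SDR

/-!
Off a null set the signs are `±1`, so a row `i` with `δ i j = 1` for some `j ∈ J` has
`Φ i j ^ 2 * x j ^ 2 = x j ^ 2 / s ≥ 1 / s` and is heavy. Hence if at most `r₁` rows are heavy,
the supports of the `r` columns indexed by `J` all lie in one set `I` of `t = ⌊r₁⌋` rows.
For a fixed `I`, negative correlation bounds the probability that the (size `s`) support of one
column lies in `I` by `C(t, s) (s / m) ^ s`, independence of the columns raises this to the
power `r`, and a union bound over the `C(m, t)` choices of `I` leaves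
`C(m, t) (C(t, s) (s / m) ^ s) ^ r`, which is at most `2 ^ (-s r)` as soon as `3 t ≤ s r` and
`100 t ≤ m`; this is where `c = 1 / 100` comes from.
-/

theorem choose_le_exp_mul_div_pow (n k : ℕ) :
    (n.choose k : ℝ) ≤ (Real.exp 1 * n / k) ^ k := by
  rcases k.eq_zero_or_pos with rfl | hk
  · simp
  have hk' : (0 : ℝ) < k := by exact_mod_cast hk
  have hfact : (k : ℝ) ^ k / k.factorial ≤ Real.exp 1 ^ k := by
    simpa [← Real.exp_nat_mul] using Real.pow_div_factorial_le_exp (x := (k : ℝ)) hk'.le k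
  calc (n.choose k : ℝ) ≤ (n : ℝ) ^ k / k.factorial := Nat.choose_le_pow_div k n
    _ = (n / k : ℝ) ^ k * ((k : ℝ) ^ k / k.factorial) := by
        rw [div_pow]; field_simp
    _ ≤ (n / k : ℝ) ^ k * Real.exp 1 ^ k := by gcongr
    _ = (Real.exp 1 * n / k) ^ k := by rw [← mul_pow]; ring

theorem choose_mul_choose_pow_le_inv_two_pow {m t s r : ℕ} (hsr : 0 < s * r) (h3t : 3 * t ≤ s * r)
    (h100t : 100 * t ≤ m) :
    (m.choose t : ℝ) * ((t.choose s : ℝ) * ((s : ℝ) / m) ^ s) ^ r ≤ ((2 : ℝ) ^ (s * r))⁻¹ := by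
  have hs : 0 < s := Nat.pos_of_mul_pos_right hsr
  have hr : 0 < r := Nat.pos_of_mul_pos_left hsr
  rcases t.eq_zero_or_pos with rfl | ht
  · simp [Nat.choose_eq_zero_of_lt hs, zero_pow hr.ne']
  have hm : 0 < m := by omega
  have ht' : (0 : ℝ) < t := by exact_mod_cast ht
  have hm' : (0 : ℝ) < m := by exact_mod_cast hm
  obtain ⟨u, hu⟩ : ∃ u, s * r = t + u := ⟨s * r - t, by omega⟩
  have hp : Real.exp 1 ^ 2 * t / m ≤ 1 / 8 := by
    have he : Real.exp 1 ^ 2 ≤ 7.4 := by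
      nlinarith [Real.exp_one_lt_d9, Real.exp_pos 1]
    have : (100 : ℝ) * t ≤ m := by exact_mod_cast h100t
    rw [div_le_iff₀ hm']
    nlinarith
  calc (m.choose t : ℝ) * ((t.choose s : ℝ) * ((s : ℝ) / m) ^ s) ^ r
      ≤ (Real.exp 1 * m / t) ^ t * ((Real.exp 1 * t / s) ^ s * ((s : ℝ) / m) ^ s) ^ r := by
        gcongr <;> exact choose_le_exp_mul_div_pow _ _
    _ = Real.exp 1 ^ (2 * t) * (Real.exp 1 * t / m) ^ u := by
        rw [← mul_pow, ← pow_mul, hu, pow_add, ← mul_assoc, ← mul_pow]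
        congr 1
        · rw [pow_mul]; congr 1; field_simp
        · congr 1; field_simp
    _ ≤ Real.exp 1 ^ u * (Real.exp 1 * t / m) ^ u := by
        gcongr
        · exact Real.one_le_exp zero_le_one
        · omega
    _ = (Real.exp 1 ^ 2 * t / m) ^ u := by rw [← mul_pow]; ring
    _ ≤ (1 / 8) ^ u := by gcongr
    _ ≤ (1 / 2) ^ (s * r) := by
        rw [show (1 / 8 : ℝ) = (1 / 2) ^ 3 by norm_num, ← pow_mul]
        exact pow_le_pow_of_le_one (by norm_num) (by norm_num) (by omega)
    _ = ((2 : ℝ) ^ (s * r))⁻¹ := by rw [one_div, inv_pow]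

section

variable {ι Ω : Type*} [MeasurableSpace Ω] {μ : Measure Ω}

theorem card_filter_eq_one_eq_sum [Fintype ι] {v : ι → ℝ} (h01 : ∀ i, v i = 0 ∨ v i = 1) :
    ((Finset.univ.filter (v · = 1)).card : ℝ) = ∑ i, v i := by
  rw [Finset.card_filter, Nat.cast_sum]
  refine Finset.sum_congr rfl fun i _ => ?_
  rcases h01 i with h | h <;> simp [h]

theorem measureReal_forall_eq_one_eq_integral_prod [IsFiniteMeasure μ] {f : ι → Ω → ℝ}
    (hf : ∀ i, Measurable (f i)) (h01 : ∀ i ω, f i ω = 0 ∨ f i ω = 1) (S : Finset ι) :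
    μ.real {ω | ∀ i ∈ S, f i ω = 1} = ∫ ω, ∏ i ∈ S, f i ω ∂μ := by
  have hmeas : MeasurableSet {ω | ∀ i ∈ S, f i ω = 1} := by
    simp only [Set.ofPred_forall]
    exact .biInter S.countable_toSet fun i _ => hf i (measurableSet_singleton 1)
  have hprod : (fun ω => ∏ i ∈ S, f i ω) = {ω | ∀ i ∈ S, f i ω = 1}.indicator 1 := by
    ext ω
    by_cases h : ∀ i ∈ S, f i ω = 1
    · simp [Set.indicator_of_mem (show ω ∈ {ω | ∀ i ∈ S, f i ω = 1} from h),
        Finset.prod_eq_one h]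
    · obtain ⟨i, hi, hne⟩ := not_forall₂.1 h
      rw [Set.indicator_of_notMem (show ω ∉ {ω | ∀ i ∈ S, f i ω = 1} from h),
        Finset.prod_eq_zero hi ((h01 i ω).resolve_right hne)]
  rw [hprod, integral_indicator_one hmeas]

theorem one_sub_measure_le_of_ae [IsProbabilityMeasure μ] {E A : Set Ω}
    (h : ∀ᵐ ω ∂μ, ω ∉ E → ω ∈ A) : 1 - μ E ≤ μ A := by
  have hcompl : μ Aᶜ ≤ μ E := measure_mono_ae <| h.mono fun ω hω hA => not_imp_comm.1 hω hA
  rw [tsub_le_iff_right, ← measure_univ (μ := μ)]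
  exact (measure_univ_le_add_compl A).trans (add_le_add_right hcompl _)

end

section

variable {Ω : Type*} [MeasurableSpace Ω] {μ : Measure Ω} {m n s : ℕ}

theorem IsRademacherArray.ae_eq_one_or_eq_neg_one [IsProbabilityMeasure μ]
    {σ : Ω → Fin m → Fin n → ℝ} (hσ : IsRademacherArray μ m n σ) :
    ∀ᵐ ω ∂μ, ∀ i j, σ ω i j = 1 ∨ σ ω i j = -1 := by
  obtain ⟨hmeas, hhalf, -⟩ := hσ
  simp only [ae_all_iff]
  intro i j
  have hm (a : ℝ) : MeasurableSet {ω | σ ω i j = a} := hmeas i j (measurableSet_singleton a)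
  have hdisj : Disjoint {ω | σ ω i j = 1} {ω | σ ω i j = -1} :=
    Set.disjoint_left.2 fun ω (h1 : _ = _) (h2 : _ = _) => by norm_num [h1] at h2
  have hunion : μ ({ω | σ ω i j = 1} ∪ {ω | σ ω i j = -1}) = 1 := by
    rw [measure_union hdisj (hm _), (hhalf i j).1, (hhalf i j).2, ENNReal.add_halves]
  exact (prob_compl_eq_zero_iff ((hm 1).union (hm (-1)))).2 hunion

variable {δ : Ω → Fin m → Fin n → ℝ}

theorem IsSJLTDelta.measure_forall_eq_one_le [IsFiniteMeasure μ] (hδ : IsSJLTDelta μ m n s δ)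
    (j : Fin n) (S : Finset (Fin m)) :
    μ {ω | ∀ i ∈ S, δ ω i j = 1} ≤ ENNReal.ofReal (((s : ℝ) / m) ^ S.card) := by
  obtain ⟨hmeas, h01, -, hneg, -⟩ := hδ
  rw [← ofReal_measureReal, measureReal_forall_eq_one_eq_integral_prod
    (f := fun i ω => δ ω i j) (fun i => hmeas i j) (fun i ω => h01 ω i j)]
  exact ENNReal.ofReal_le_ofReal (hneg j S)

theorem IsSJLTDelta.measure_col_supported_le [IsFiniteMeasure μ] (hδ : IsSJLTDelta μ m n s δ)
    (j : Fin n) (I : Finset (Fin m)) :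
    μ {ω | ∀ i ∉ I, δ ω i j = 0} ≤ I.card.choose s * ENNReal.ofReal (((s : ℝ) / m) ^ s) := by
  classical
  have hcover : {ω | ∀ i ∉ I, δ ω i j = 0} ⊆
      ⋃ S ∈ I.powersetCard s, {ω | ∀ i ∈ S, δ ω i j = 1} := by
    intro ω hω
    have hsupp : (Finset.univ.filter (δ ω · j = 1)).card = s := by
      exact_mod_cast (card_filter_eq_one_eq_sum fun i => hδ.2.1 ω i j).trans (hδ.2.2.1 ω j)
    refine Set.mem_biUnion (Finset.mem_powersetCard.2 ⟨fun i hi => ?_, hsupp⟩)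
      fun i hi => (Finset.mem_filter.1 hi).2
    by_contra hiI
    exact one_ne_zero ((Finset.mem_filter.1 hi).2.symm.trans (hω i hiI))
  calc μ {ω | ∀ i ∉ I, δ ω i j = 0}
      ≤ ∑ S ∈ I.powersetCard s, μ {ω | ∀ i ∈ S, δ ω i j = 1} :=
        (measure_mono hcover).trans (measure_biUnion_finset_le _ _)
    _ ≤ ∑ S ∈ I.powersetCard s, ENNReal.ofReal (((s : ℝ) / m) ^ s) :=
        Finset.sum_le_sum fun S hS => by
          simpa [(Finset.mem_powersetCard.1 hS).2] using hδ.measure_forall_eq_one_le j S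
    _ = I.card.choose s * ENNReal.ofReal (((s : ℝ) / m) ^ s) := by
        rw [Finset.sum_const, Finset.card_powersetCard, nsmul_eq_mul]

theorem IsSJLTDelta.measure_cols_supported_le [IsFiniteMeasure μ] (hδ : IsSJLTDelta μ m n s δ)
    (J : Finset (Fin n)) (I : Finset (Fin m)) :
    μ {ω | ∀ j ∈ J, ∀ i ∉ I, δ ω i j = 0} ≤
      (I.card.choose s * ENNReal.ofReal (((s : ℝ) / m) ^ s)) ^ J.card := by
  have hV : MeasurableSet {v : Fin m → ℝ | ∀ i ∉ I, v i = 0} := by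
    simp only [Set.ofPred_forall]
    exact .iInter fun i => .iInter fun _ => measurable_pi_apply i (measurableSet_singleton 0)
  have hinter : {ω | ∀ j ∈ J, ∀ i ∉ I, δ ω i j = 0} =
      ⋂ j ∈ J, (fun ω i => δ ω i j) ⁻¹' {v | ∀ i ∉ I, v i = 0} := by
    ext ω; simp
  rw [hinter, hδ.2.2.2.2.measure_inter_preimage_eq_mul J (fun _ _ => hV)]
  calc ∏ j ∈ J, μ ((fun ω i => δ ω i j) ⁻¹' {v | ∀ i ∉ I, v i = 0})
      ≤ ∏ _j ∈ J, (I.card.choose s * ENNReal.ofReal (((s : ℝ) / m) ^ s)) :=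
        Finset.prod_le_prod' fun j _ => hδ.measure_col_supported_le j I
    _ = _ := Finset.prod_const _

theorem IsSJLTDelta.measure_exists_cols_supported_le [IsFiniteMeasure μ]
    (hδ : IsSJLTDelta μ m n s δ) (J : Finset (Fin n)) (t : ℕ) :
    μ {ω | ∃ I : Finset (Fin m), I.card = t ∧ ∀ j ∈ J, ∀ i ∉ I, δ ω i j = 0} ≤
      m.choose t * (t.choose s * ENNReal.ofReal (((s : ℝ) / m) ^ s)) ^ J.card := by
  have hunion : {ω | ∃ I : Finset (Fin m), I.card = t ∧ ∀ j ∈ J, ∀ i ∉ I, δ ω i j = 0} =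
      ⋃ I ∈ (Finset.univ : Finset (Fin m)).powersetCard t, {ω | ∀ j ∈ J, ∀ i ∉ I, δ ω i j = 0} := by
    ext ω; simp
  rw [hunion]
  calc _ ≤ ∑ I ∈ (Finset.univ : Finset (Fin m)).powersetCard t,
          μ {ω | ∀ j ∈ J, ∀ i ∉ I, δ ω i j = 0} := measure_biUnion_finset_le _ _
    _ ≤ ∑ _I ∈ (Finset.univ : Finset (Fin m)).powersetCard t,
          (t.choose s * ENNReal.ofReal (((s : ℝ) / m) ^ s)) ^ J.card :=
        Finset.sum_le_sum fun I hI => by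
          simpa [(Finset.mem_powersetCard.1 hI).2] using hδ.measure_cols_supported_le J I
    _ = _ := by simp [Finset.sum_const, Finset.card_powersetCard, nsmul_eq_mul]

end

theorem exists_cols_supported_of_ncard_heavy_le {s m n t : ℕ} {Φ : Matrix (Fin m) (Fin n) ℝ}
    {δ : Fin m → Fin n → ℝ} {x : Fin n → ℝ} {J : Finset (Fin n)}
    (h01 : ∀ i j, δ i j = 0 ∨ δ i j = 1) (hΦ : ∀ i j, δ i j = 1 → Φ i j ^ 2 = 1 / s)
    (hx : ∀ j ∈ J, 1 ≤ |x j|) (htm : t ≤ m)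
    (hheavy : {i | (1 : ℝ) / s ≤ ∑ j, Φ i j ^ 2 * x j ^ 2}.ncard ≤ t) :
    ∃ I : Finset (Fin m), I.card = t ∧ ∀ j ∈ J, ∀ i ∉ I, δ i j = 0 := by
  classical
  obtain ⟨I, hHI, -, hI⟩ := Finset.exists_subsuperset_card_eq (n := t)
    (Finset.subset_univ {i | (1 : ℝ) / s ≤ ∑ j, Φ i j ^ 2 * x j ^ 2}.toFinset)
    (by rwa [← Set.ncard_eq_toFinset_card']) (by simpa using htm)
  refine ⟨I, hI, fun j hj i hi => (h01 i j).resolve_right fun h1 => hi (hHI ?_)⟩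
  rw [Set.mem_toFinset, Set.mem_ofPred_eq]
  calc (1 : ℝ) / s ≤ Φ i j ^ 2 * x j ^ 2 := by
        rw [hΦ i j h1]
        exact le_mul_of_one_le_right (by positivity) (one_le_sq_iff_one_le_abs _ |>.2 (hx j hj))
    _ ≤ ∑ k, Φ i k ^ 2 * x k ^ 2 :=
        Finset.single_le_sum (f := fun k => Φ i k ^ 2 * x k ^ 2) (fun k _ => by positivity)
          (Finset.mem_univ j)

/-- With high probability, many rows of an SJLT pick up mass from a spread vector. -/
theorem many_heavy_rows :
    ∃ c : ℝ, 0 < c ∧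
      ∀ (n m s r : ℕ) (Ω : Type) [MeasurableSpace Ω] (μ : Measure Ω),
        IsProbabilityMeasure μ →
      ∀ (σ δ : Ω → Fin m → Fin n → ℝ) (Φ : Ω → Matrix (Fin m) (Fin n) ℝ),
        IsSJLT μ m n s σ δ Φ →
      ∀ (x : Fin n → ℝ) (J : Finset (Fin n)), J.card = r →
        (∀ j ∈ J, 1 ≤ |x j|) →
        1 - ENNReal.ofReal (((2 : ℝ) ^ (s * r))⁻¹) ≤
          μ {ω | min ((s * r : ℝ) / 3) (c * m) <
              (({i : Fin m | (1 : ℝ) / s ≤ ∑ j, (Φ ω i j) ^ 2 * x j ^ 2}).ncard : ℝ)} := by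
  refine ⟨1 / 100, by norm_num, ?_⟩
  rintro n m s r Ω _ μ _ σ δ Φ ⟨hσ, hδ, -, hΦ⟩ x J hJ hx
  rcases (s * r).eq_zero_or_pos with hsr | hsr
  · simp [hsr]
  set r₁ : ℝ := min ((s * r : ℝ) / 3) (1 / 100 * m)
  set t := ⌊r₁⌋₊
  have htr₁ : (t : ℝ) ≤ r₁ := Nat.floor_le (by positivity)
  have h3t : 3 * t ≤ s * r := by
    exact_mod_cast (show ((3 * t : ℕ) : ℝ) ≤ (s * r : ℕ) by
      push_cast; linarith [htr₁.trans (min_le_left _ _)])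
  have h100t : 100 * t ≤ m := by
    exact_mod_cast (show ((100 * t : ℕ) : ℝ) ≤ m by
      push_cast; linarith [htr₁.trans (min_le_right _ _)])
  refine le_trans ?_ (one_sub_measure_le_of_ae
    (E := {ω | ∃ I : Finset (Fin m), I.card = t ∧ ∀ j ∈ J, ∀ i ∉ I, δ ω i j = 0}) ?_)
  · gcongr
    calc _ ≤ _ := hδ.measure_exists_cols_supported_le J t
      _ = ENNReal.ofReal ((m.choose t : ℝ) * ((t.choose s : ℝ) * ((s : ℝ) / m) ^ s) ^ r) := by
        rw [hJ, ENNReal.ofReal_mul (by positivity), ENNReal.ofReal_natCast,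
          ENNReal.ofReal_pow (by positivity) r, ENNReal.ofReal_mul (by positivity),
          ENNReal.ofReal_natCast]
      _ ≤ _ := ENNReal.ofReal_le_ofReal (choose_mul_choose_pow_le_inv_two_pow hsr h3t h100t)
  · filter_upwards [hσ.ae_eq_one_or_eq_neg_one] with ω hσω hsupp
    by_contra hfew
    refine hsupp (exists_cols_supported_of_ncard_heavy_le (hδ.2.1 ω) (fun i j h1 => ?_) hx
      (by omega) (Nat.le_floor (not_lt.1 hfew)))
    rw [hΦ, h1, mul_one, div_pow, Real.sq_sqrt (Nat.cast_nonneg s)]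
    rcases hσω i j with h | h <;> simp [h]

end SDR
end
end
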